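/- arXiv:1610.06261 — 2 statements merged into one kernel-verified Lean document; each statement's English description precedes it below -/
import Mathlib

section
/- For SL_2 in characteristic p, if n = Σ_{i=0}^m n_i p^i is the p-adic expansion of n (with 0 ≤ n_i < p), then the product Π_{i=0}^m (Σ_{j=0}^{n_i} e^{(n_i − 2j)p^i}) in Z[Z] has all coefficients equal to 0 or 1, i.e., it is a multiplicity-free character. -/
/-!
Expanding the product, the monomials are indexed by tuples `(jᵢ)` with `jᵢ ≤ nᵢ < p`, and the
tuple `(jᵢ)` contributes `e^(n - 2 ∑ jᵢ pⁱ)` where `n = ∑ nᵢ pⁱ`. By uniqueness of base-`p`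
expansions these exponents are pairwise distinct, so every coefficient counts at most one term.
-/

open Finset AddMonoidAlgebra

theorem AddMonoidAlgebra.coeff_sum_single_one_mem_of_injOn {ι R G : Type*} [Semiring R]
    (s : Finset ι) (φ : ι → G) (hφ : Set.InjOn φ s) (g : G) :
    (∑ i ∈ s, single (φ i) (1 : R)).coeff g ∈ ({0, 1} : Set R) := by
  classical
  simp only [coeff_sum, Finsupp.finsetSum_apply, coeff_single, Finsupp.single_apply, sum_boole]
  have hcard : #{i ∈ s | φ i = g} ≤ 1 :=
    card_le_one.2 fun a ha b hb => hφ (mem_filter.1 ha).1 (mem_filter.1 hb).1 <| by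
      rw [(mem_filter.1 ha).2, (mem_filter.1 hb).2]
  interval_cases #{i ∈ s | φ i = g} <;> simp

theorem AddMonoidAlgebra.prod_sum_single_one {ι κ R G : Type*} [Fintype ι] [DecidableEq ι]
    [CommSemiring R] [AddCommMonoid G] (t : ι → Finset κ) (f : ι → κ → G) :
    ∏ i, ∑ j ∈ t i, single (f i j) (1 : R) =
      ∑ x ∈ Fintype.piFinset t, single (∑ i, f i (x i)) 1 := by
  simp only [prod_univ_sum, prod_single, prod_const_one]

theorem Nat.sum_mul_pow_injOn_lt (p k : ℕ) :
    Set.InjOn (fun x : Fin k → ℕ => ∑ i, x i * p ^ (i : ℕ)) {x | ∀ i, x i < p} := by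
  intro x hx y hy hxy
  have : (fun i => ⟨x i, hx i⟩ : Fin k → Fin p) = fun i => ⟨y i, hy i⟩ :=
    finFunctionFinEquiv.injective <| Fin.ext <| by simpa [finFunctionFinEquiv_apply] using hxy
  funext i
  exact congrArg Fin.val (congrFun this i)

theorem steinberg_product_multiplicity_free_general (p m : ℕ)
    (n : ℕ → ℕ) (hn : ∀ i, n i < p) (k : ℤ) :
    (∏ i ∈ Finset.range (m + 1), ∑ j ∈ Finset.range (n i + 1),
        AddMonoidAlgebra.single (((n i : ℤ) - 2 * j) * (p : ℤ) ^ i) (1 : ℤ)).coeff k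
      ∈ ({0, 1} : Set ℤ) := by
  classical
  set exponent : ℕ → ℕ → ℤ := fun i j => ((n i : ℤ) - 2 * j) * (p : ℤ) ^ i
  set digits := Fintype.piFinset fun i : Fin (m + 1) => range (n i + 1)
  rw [prod_range (fun i => ∑ j ∈ range (n i + 1), single (exponent i j) 1),
    prod_sum_single_one (fun i : Fin (m + 1) => range (n i + 1)) fun i j => exponent i j]
  refine coeff_sum_single_one_mem_of_injOn _ _ (fun x hx y hy hxy => ?_) k
  have hdigit : ∀ z ∈ digits, ∀ i, z i < p :=
    fun z hz i => (mem_range.1 (Fintype.mem_piFinset.1 hz i)).trans_le (hn i)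
  have hexponent : ∀ z : Fin (m + 1) → ℕ, ∑ i : Fin (m + 1), exponent i (z i) =
      ∑ i : Fin (m + 1), (n i : ℤ) * p ^ (i : ℕ) - 2 * ((∑ i, z i * p ^ (i : ℕ) : ℕ) : ℤ) := by
    intro z
    push_cast
    simp only [exponent, sub_mul, sum_sub_distrib, mul_sum, mul_assoc]
  refine Nat.sum_mul_pow_injOn_lt p (m + 1) (hdigit x hx) (hdigit y hy) ?_
  dsimp only at hxy ⊢
  rw [hexponent, hexponent] at hxy
  omega

theorem steinberg_product_multiplicity_free (p m : ℕ) (hp : 1 < p)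
    (n : ℕ → ℕ) (hn : ∀ i, n i < p) (k : ℤ) :
    (∏ i ∈ Finset.range (m + 1), ∑ j ∈ Finset.range (n i + 1),
        AddMonoidAlgebra.single (((n i : ℤ) - 2 * j) * (p : ℤ) ^ i) (1 : ℤ)).coeff k
      ∈ ({0, 1} : Set ℤ) :=
  steinberg_product_multiplicity_free_general p m n hn k
end

section
/- Let A = Z[v,v^{-1}] and let H be the Hecke algebra of a Coxeter system (W,S) with bar involution. Suppose {b_x}_{x∈W} are bar-invariant elements with b_x = h_x + Σ_{y<x} p_{y,x} h_y where p_{y,x} ∈ v·Z[v]. Then the family {b_x} is unique: if {b'_x} is another such family then b_x = b'_x for all x. -/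
/-!
If `b` and `b'` are two such families, `d = b x - b' x` is bar-invariant and its coefficients
all lie in `v ℤ[v]`, since the leading `h_x`-coefficients cancel. Because bar is unitriangular
with respect to the Bruhat order, the coefficient of `d` at a maximal element of its support is
itself invariant under `v ↦ v⁻¹`; but the only such element of `v ℤ[v]` is `0`.
-/

open LaurentPolynomial
open scoped Polynomial

namespace LaurentPolynomial

lemma ringHom_apply_eq_invert (φ : ℤ[T;T⁻¹] →+* ℤ[T;T⁻¹]) (hφ : ∀ n : ℤ, φ (T n) = T (-n))
    (f : ℤ[T;T⁻¹]) : φ f = invert f := by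
  induction f using LaurentPolynomial.induction_on' with
  | add p q hp hq => rw [map_add, map_add, hp, hq]
  | C_mul_T n a =>
    have hC : φ (C a) = C a := by
      rw [show C a = ((a : ℤ) : ℤ[T;T⁻¹]) by simp, map_intCast]
    rw [map_mul, hC, hφ, map_mul, invert_C, invert_T]

lemma coeff_toLaurent_X_mul_of_nonpos {R : Type*} [Semiring R] (q : R[X]) {n : ℤ} (hn : n ≤ 0) :
    (Polynomial.toLaurent (Polynomial.X * q)).coeff n = 0 := by
  by_contra hne
  have hmem := Finsupp.mem_support_iff.mpr hne
  rw [support_coeff_toLaurent] at hmem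
  obtain ⟨m, hm, rfl⟩ := Finset.mem_map.mp hmem
  obtain rfl : m = 0 := by simp at hn; omega
  simp at hm

lemma eq_zero_of_invert_eq_self_of_coeff_nonpos {R : Type*} [CommSemiring R] {f : R[T;T⁻¹]}
    (hinv : invert f = f) (hf : ∀ n ≤ 0, f.coeff n = 0) : f = 0 := by
  ext n
  rcases le_or_gt n 0 with hn | hn
  · exact hf n hn
  · rw [← hinv, invert_apply]
    exact hf (-n) (by omega)

lemma T_one_mul_toLaurent_eq_zero_of_invert_eq_self {R : Type*} [CommSemiring R] {q : R[X]}
    (hinv : invert (T 1 * Polynomial.toLaurent q) = T 1 * Polynomial.toLaurent q) :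
    T 1 * Polynomial.toLaurent q = 0 := by
  rw [← Polynomial.toLaurent_X, ← map_mul] at hinv ⊢
  exact eq_zero_of_invert_eq_self_of_coeff_nonpos hinv
    fun n hn => coeff_toLaurent_X_mul_of_nonpos q hn

end LaurentPolynomial

namespace Module.Basis

variable {ι A M : Type*} [PartialOrder ι] [Ring A] [AddCommGroup M] [Module A M]
  (h : Basis ι A M) {bar : M →+ M}

lemma repr_map_self_of_not_lt {y z : ι}
    (hbar : bar (h z) - h z ∈ Submodule.span A (h '' {w | w < z})) (hyz : ¬ y < z) :
    h.repr (bar (h z)) y = h.repr (h z) y := by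
  have hsupp := h.mem_span_image.mp hbar
  have hy : h.repr (bar (h z) - h z) y = 0 := by
    by_contra hne
    exact hyz (hsupp (Finsupp.mem_support_iff.mpr hne))
  rwa [map_sub, Finsupp.sub_apply, sub_eq_zero] at hy

lemma repr_map_apply_of_maximal {σ : A →+* A}
    (hsemi : ∀ (a : A) (m : M), bar (a • m) = σ a • bar m)
    (hbar : ∀ z, bar (h z) - h z ∈ Submodule.span A (h '' {w | w < z}))
    {d : M} {y : ι} (hy : Maximal (· ∈ (h.repr d).support) y) :
    h.repr (bar d) y = σ (h.repr d y) := by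
  have hnot_lt : ∀ z ∈ (h.repr d).support, ¬ y < z := fun z hz hlt =>
    hlt.not_ge (hy.2 hz hlt.le)
  conv_lhs => rw [← h.linearCombination_repr d, Finsupp.linearCombination_apply,
    map_finsuppSum, map_finsuppSum, Finsupp.sum_apply]
  rw [Finsupp.sum, Finset.sum_eq_single_of_mem y hy.1]
  · rw [hsemi, map_smul, Finsupp.smul_apply, repr_map_self_of_not_lt h (hbar y) (lt_irrefl y),
      repr_self, Finsupp.single_eq_same, smul_eq_mul, mul_one]
  · intro z hz hzy
    rw [hsemi, map_smul, Finsupp.smul_apply, repr_map_self_of_not_lt h (hbar z) (hnot_lt z hz),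
      repr_self, Finsupp.single_eq_of_ne hzy.symm, smul_zero]

end Module.Basis

theorem kazhdan_lusztig_basis_unique_general {W H : Type*} [PartialOrder W]
    [Ring H] [Algebra (LaurentPolynomial ℤ) H]
    (h : Module.Basis W (LaurentPolynomial ℤ) H)
    (bar0 : LaurentPolynomial ℤ →+* LaurentPolynomial ℤ)
    (hbar0 : ∀ n : ℤ, bar0 (T n) = T (-n))
    (bar : H →+ H)
    (hsemi : ∀ (a : LaurentPolynomial ℤ) (m : H), bar (a • m) = bar0 a • bar m)
    (hbarstd : ∀ x : W,
      bar (h x) - h x ∈ Submodule.span (LaurentPolynomial ℤ) (h '' {y | y < x}))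
    (b b' : W → H)
    (hb : ∀ x, bar (b x) = b x) (hb' : ∀ x, bar (b' x) = b' x)
    (hcoef : ∀ x, h.repr (b x) x = 1 ∧ ∀ y, y ≠ x → h.repr (b x) y ≠ 0 →
      y < x ∧ ∃ q : Polynomial ℤ, h.repr (b x) y = T 1 * Polynomial.toLaurent q)
    (hcoef' : ∀ x, h.repr (b' x) x = 1 ∧ ∀ y, y ≠ x → h.repr (b' x) y ≠ 0 →
      y < x ∧ ∃ q : Polynomial ℤ, h.repr (b' x) y = T 1 * Polynomial.toLaurent q) :
    ∀ x, b x = b' x := by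
  intro x
  by_contra hne
  set d := b x - b' x with hd
  have hsupp : (h.repr d).support.Nonempty := by simpa [d, sub_eq_zero] using hne
  obtain ⟨y, hy⟩ := (h.repr d).support.exists_maximal hsupp
  have hyx : y ≠ x := by
    rintro rfl
    exact Finsupp.mem_support_iff.mp hy.1 (by simp [d, (hcoef y).1, (hcoef' y).1])
  have hvZ (a : ℤ[T;T⁻¹]) (ha : a ≠ 0 → y < x ∧ ∃ q : ℤ[X], a = T 1 * Polynomial.toLaurent q) :
      ∃ q : ℤ[X], a = T 1 * Polynomial.toLaurent q := by
    by_cases ha0 : a = 0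
    exacts [⟨0, by simp [ha0]⟩, (ha ha0).2]
  obtain ⟨q₁, hq₁⟩ := hvZ _ ((hcoef x).2 y hyx)
  obtain ⟨q₂, hq₂⟩ := hvZ _ ((hcoef' x).2 y hyx)
  have hq : h.repr d y = T 1 * Polynomial.toLaurent (q₁ - q₂) := by
    simp [d, hq₁, hq₂, mul_sub]
  have hinv : invert (h.repr d y) = h.repr d y := by
    rw [← ringHom_apply_eq_invert bar0 hbar0, ← h.repr_map_apply_of_maximal hsemi hbarstd hy, hd,
      map_sub, hb, hb']
  rw [hq] at hinv
  exact Finsupp.mem_support_iff.mp hy.1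
    (hq.trans (T_one_mul_toLaurent_eq_zero_of_invert_eq_self hinv))

theorem kazhdan_lusztig_basis_unique {B W H : Type*} (M : CoxeterMatrix B) [Group W]
    [PartialOrder W] (cs : CoxeterSystem M W)
    [Ring H] [Algebra (LaurentPolynomial ℤ) H]
    (h : Module.Basis W (LaurentPolynomial ℤ) H)
    (bar0 : LaurentPolynomial ℤ →+* LaurentPolynomial ℤ)
    (hbar0 : ∀ n : ℤ, bar0 (T n) = T (-n))
    (bar : H →+ H)
    (hsemi : ∀ (a : LaurentPolynomial ℤ) (m : H), bar (a • m) = bar0 a • bar m)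
    (hbarstd : ∀ x : W,
      bar (h x) - h x ∈ Submodule.span (LaurentPolynomial ℤ) (h '' {y | y < x}))
    (b b' : W → H)
    (hb : ∀ x, bar (b x) = b x) (hb' : ∀ x, bar (b' x) = b' x)
    (hcoef : ∀ x, h.repr (b x) x = 1 ∧ ∀ y, y ≠ x → h.repr (b x) y ≠ 0 →
      y < x ∧ ∃ q : Polynomial ℤ, h.repr (b x) y = T 1 * Polynomial.toLaurent q)
    (hcoef' : ∀ x, h.repr (b' x) x = 1 ∧ ∀ y, y ≠ x → h.repr (b' x) y ≠ 0 →
      y < x ∧ ∃ q : Polynomial ℤ, h.repr (b' x) y = T 1 * Polynomial.toLaurent q) :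
    ∀ x, b x = b' x :=
  kazhdan_lusztig_basis_unique_general h bar0 hbar0 bar hsemi hbarstd b b' hb hb' hcoef hcoef'
end
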